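/- If J − J* is injective, then every ℝ-linear map ω : V → ℂ can be written uniquely as ω = ω' + ω'' with ω' J-linear and ω'' J*-linear. Equivalently, the ℝ-linear map from (V →ₗ[ℝ] ℝ) × (V →ₗ[ℝ] ℝ) to the space of ℝ-linear maps V → ℂ sending (ω₁, ω₂) to the map v ↦ (ω₁(v) + ω₂(v)) − i·(ω₁(Jv) + ω₂(J*v)) is bijective. -/

import Mathlib

/-!
Sending a real functional `ω` to `ω - i ω ∘ J` is inverse to taking real parts on `J`-linear
maps `V → ℂ`. Combining these maps for `J` and `J*` gives
`Φ (ω₁, ω₂) = (ω₁ + ω₂) - i (ω₁ ∘ J + ω₂ ∘ J*)`. If `Φ (ω₁, ω₂) = 0`, then the real part gives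
`ω₂ = -ω₁` and the imaginary part `ω₁ ∘ (J - J*) = 0`, so `ω₁ = 0` as `J - J*` is onto.
Both sides of `Φ` have real dimension `2 dim V`, so `Φ` is bijective, and the decomposition of
`ω = Φ (ω₁, ω₂)` into its two summands is the unique one, because each `J`-linear map is recovered
from its real part.
-/

open Complex

namespace LinearMap

variable {V : Type*} [AddCommGroup V] [Module ℝ V]

def IsJLinear (J : V →ₗ[ℝ] V) (ξ : V →ₗ[ℝ] ℂ) : Prop :=
  ∀ v, ξ (J v) = I * ξ v

noncomputable def liftOfRe (J : V →ₗ[ℝ] V) : (V →ₗ[ℝ] ℝ) →ₗ[ℝ] (V →ₗ[ℝ] ℂ) where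
  toFun ω := ofRealAm.toLinearMap ∘ₗ ω - I • (ofRealAm.toLinearMap ∘ₗ ω ∘ₗ J)
  map_add' ω η := by ext v; simp only [add_apply, coe_comp, Function.comp_apply,
    AlgHom.toLinearMap_apply, ofRealAm_coe, sub_apply, smul_apply, ofReal_add, smul_eq_mul]; ring
  map_smul' c ω := by ext v; simp only [smul_apply, coe_comp, Function.comp_apply,
    AlgHom.toLinearMap_apply, ofRealAm_coe, sub_apply, smul_eq_mul, ofReal_mul,
    RingHom.id_apply, real_smul]; ring

theorem liftOfRe_apply (J : V →ₗ[ℝ] V) (ω : V →ₗ[ℝ] ℝ) (v : V) :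
    liftOfRe J ω v = ω v - I * ω (J v) := by
  simp [liftOfRe]

theorem isJLinear_liftOfRe {J : V →ₗ[ℝ] V} (hJ : J ∘ₗ J = -id) (ω : V →ₗ[ℝ] ℝ) :
    IsJLinear J (liftOfRe J ω) := by
  intro v
  have hJJ : J (J v) = -v := by simpa using congr($hJ v)
  rw [liftOfRe_apply, liftOfRe_apply, hJJ, map_neg, ofReal_neg]
  linear_combination (ω (J v) : ℂ) * I_sq

theorem liftOfRe_re_comp {J : V →ₗ[ℝ] V} {ξ : V →ₗ[ℝ] ℂ} (hξ : IsJLinear J ξ) :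
    liftOfRe J (reLm ∘ₗ ξ) = ξ := by
  ext v
  have him : (ξ (J v)).re = -(ξ v).im := by simp [hξ v]
  apply Complex.ext <;> simp [liftOfRe_apply, him]

theorem injective_coprod_liftOfRe {J Jstar : V →ₗ[ℝ] V}
    (hsurj : Function.Surjective (J - Jstar)) :
    Function.Injective ((liftOfRe J).coprod (liftOfRe Jstar)) := by
  rw [← ker_eq_bot, ker_eq_bot']
  rintro ⟨ω₁, ω₂⟩ h
  have hv (v : V) : (ω₁ v + ω₂ v : ℂ) - I * (ω₁ (J v) + ω₂ (Jstar v) : ℝ) = 0 := by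
    have := congr($h v)
    simp only [coprod_apply, add_apply, liftOfRe_apply, zero_apply] at this
    push_cast
    linear_combination this
  have hω₂ : ω₂ = -ω₁ := by
    ext v
    simpa [add_eq_zero_iff_eq_neg'] using congr(re $(hv v))
  have hω₁ : ω₁ = 0 := by
    ext w
    obtain ⟨v, rfl⟩ := hsurj w
    have := congr(im $(hv v))
    simp only [hω₂, neg_apply, sub_im, add_im, ofReal_im, mul_im, I_re, I_im, ofReal_re,
      zero_im] at this
    simp only [sub_apply, map_sub, zero_apply]
    linarith
  simp [hω₁, hω₂]

theorem bijective_coprod_liftOfRe [FiniteDimensional ℝ V] {J Jstar : V →ₗ[ℝ] V}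
    (hinj : Function.Injective (J - Jstar)) :
    Function.Bijective ((liftOfRe J).coprod (liftOfRe Jstar)) := by
  have hΦ := injective_coprod_liftOfRe (injective_iff_surjective.mp hinj)
  refine ⟨hΦ, (injective_iff_surjective_of_finrank_eq_finrank ?_).mp hΦ⟩
  simp only [Module.finrank_prod, Module.finrank_linearMap, Module.finrank_self,
    finrank_real_complex]
  ring

theorem existsUnique_add_isJLinear {J Jstar : V →ₗ[ℝ] V}
    (hJ : J ∘ₗ J = -id) (hJstar : Jstar ∘ₗ Jstar = -id)
    (hΦ : Function.Bijective ((liftOfRe J).coprod (liftOfRe Jstar))) (ω : V →ₗ[ℝ] ℂ) :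
    ∃! p : (V →ₗ[ℝ] ℂ) × (V →ₗ[ℝ] ℂ), ω = p.1 + p.2 ∧ IsJLinear J p.1 ∧ IsJLinear Jstar p.2 := by
  obtain ⟨q, rfl⟩ := hΦ.2 ω
  refine ⟨(liftOfRe J q.1, liftOfRe Jstar q.2),
    ⟨rfl, isJLinear_liftOfRe hJ q.1, isJLinear_liftOfRe hJstar q.2⟩, ?_⟩
  rintro ⟨η₁, η₂⟩ ⟨hsum, h₁, h₂⟩
  have hq : (reLm ∘ₗ η₁, reLm ∘ₗ η₂) = q := hΦ.1 <| by
    rw [coprod_apply, liftOfRe_re_comp h₁, liftOfRe_re_comp h₂, hsum]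
  rw [← hq, Prod.mk.injEq, liftOfRe_re_comp h₁, liftOfRe_re_comp h₂]
  exact ⟨rfl, rfl⟩

end LinearMap

theorem linear_functional_decomposition
    (V : Type*) [AddCommGroup V] [Module ℝ V] [FiniteDimensional ℝ V]
    (J Jstar : V →ₗ[ℝ] V)
    (hJ : J ∘ₗ J = -LinearMap.id) (hJstar : Jstar ∘ₗ Jstar = -LinearMap.id)
    (hinj : Function.Injective (J - Jstar)) :
    (∀ ω : V →ₗ[ℝ] ℂ, ∃! p : (V →ₗ[ℝ] ℂ) × (V →ₗ[ℝ] ℂ),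
        ω = p.1 + p.2 ∧ (∀ v, p.1 (J v) = I * p.1 v) ∧ (∀ v, p.2 (Jstar v) = I * p.2 v))
    ∧
    Function.Bijective (fun p : (V →ₗ[ℝ] ℝ) × (V →ₗ[ℝ] ℝ) =>
      (Complex.ofRealAm.toLinearMap ∘ₗ (p.1 + p.2)
        - I • (Complex.ofRealAm.toLinearMap ∘ₗ (p.1 ∘ₗ J + p.2 ∘ₗ Jstar)) : V →ₗ[ℝ] ℂ)) := by
  have hΦ := LinearMap.bijective_coprod_liftOfRe hinj
  refine ⟨LinearMap.existsUnique_add_isJLinear hJ hJstar hΦ, ?_⟩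
  convert hΦ using 1
  ext p v
  simp only [LinearMap.coprod_apply, LinearMap.add_apply, LinearMap.sub_apply,
    LinearMap.smul_apply, LinearMap.liftOfRe_apply, LinearMap.coe_comp, Function.comp_apply,
    AlgHom.coe_toLinearMap, ofRealAm_coe, ofReal_add, smul_eq_mul]
  ring
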